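/- arXiv:2001.05421 — 3 statements merged into one kernel-verified Lean document; each statement's English description precedes it below -/
import Mathlib

section
/- Let K be a field, V a K-vector space, s : V → V a K-linear map, and W ⊆ V a subspace invariant under s. Let T₁ = α·s − λ·id and T₂ = −β·s + μ·id with α, β, λ, μ ∈ K and αμ − βλ ≠ 0. If x ∈ V satisfies T₁^{k}(x) ∈ W and T₂^{N−k}(x) ∈ W for some natural numbers 0 ≤ k ≤ N, then x ∈ W. -/
theorem stmt_4 {K : Type*} [Field K] {V : Type*} [AddCommGroup V] [Module K V]
    (s : V →ₗ[K] V) (W : Submodule K V) (hW : ∀ w ∈ W, s w ∈ W)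
    (α β lam μ : K) (hdet : α * μ - β * lam ≠ 0)
    (x : V) (k N : ℕ) (hkN : k ≤ N)
    (h1 : ((α • s - lam • (LinearMap.id : V →ₗ[K] V)) ^ k) x ∈ W)
    (h2 : ((-β • s + μ • (LinearMap.id : V →ₗ[K] V)) ^ (N - k)) x ∈ W) :
    x ∈ W := by
  set T1 : V →ₗ[K] V := α • s - lam • LinearMap.id with hT1def
  set T2 : V →ₗ[K] V := -β • s + μ • LinearMap.id with hT2def
  -- W stable under T1 and T2
  have hT1W : ∀ w ∈ W, T1 w ∈ W := by
    intro w hw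
    simp only [hT1def, LinearMap.sub_apply, LinearMap.smul_apply, LinearMap.id_apply]
    exact W.sub_mem (W.smul_mem _ (hW w hw)) (W.smul_mem _ hw)
  have hT2W : ∀ w ∈ W, T2 w ∈ W := by
    intro w hw
    simp only [hT2def, LinearMap.add_apply, LinearMap.smul_apply, LinearMap.id_apply]
    exact W.add_mem (W.smul_mem _ (hW w hw)) (W.smul_mem _ hw)
  have hT1pow : ∀ (n : ℕ) (w : V), w ∈ W → (T1 ^ n) w ∈ W := by
    intro n
    induction n with
    | zero => intro w hw; simpa using hw
    | succ m ih =>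
        intro w hw
        rw [pow_succ, Module.End.mul_apply]
        exact ih _ (hT1W w hw)
  have hT2pow : ∀ (n : ℕ) (w : V), w ∈ W → (T2 ^ n) w ∈ W := by
    intro n
    induction n with
    | zero => intro w hw; simpa using hw
    | succ m ih =>
        intro w hw
        rw [pow_succ, Module.End.mul_apply]
        exact ih _ (hT2W w hw)
  -- T1 and T2 commute
  have hc : Commute T1 T2 := by
    show T1 * T2 = T2 * T1
    ext v
    simp only [hT1def, hT2def, Module.End.mul_apply, LinearMap.sub_apply, LinearMap.add_apply,
      LinearMap.smul_apply, LinearMap.id_apply, map_add, map_sub, map_smul, map_neg,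
      LinearMap.neg_apply, smul_smul]
    module
  -- key identity
  have key : β • T1 + α • T2 = (α * μ - β * lam) • (1 : V →ₗ[K] V) := by
    ext v
    simp only [hT1def, hT2def, LinearMap.add_apply, LinearMap.smul_apply, LinearMap.sub_apply,
      LinearMap.neg_apply, LinearMap.id_apply, Module.End.one_apply, smul_smul]
    module
  -- each binomial term lands in W
  have hterm : ∀ i : ℕ, (T1 ^ i * T2 ^ (N - i)) x ∈ W := by
    intro i
    by_cases hik : i ≤ k
    · have : N - i = (k - i) + (N - k) := by omega
      rw [this, pow_add, Module.End.mul_apply, Module.End.mul_apply]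
      exact hT1pow _ _ (hT2pow _ _ h2)
    · have hcc := (hc.pow_pow i (N - i)).eq
      rw [hcc, Module.End.mul_apply]
      have : i = (i - k) + k := by omega
      rw [this, pow_add, Module.End.mul_apply]
      exact hT2pow _ _ (hT1pow _ _ h1)
  -- expand the power of the sum
  have hcomm : Commute (β • T1) (α • T2) := by
    apply Commute.smul_left
    apply Commute.smul_right
    exact hc
  have hsum : ((β • T1 + α • T2) ^ N) x ∈ W := by
    rw [hcomm.add_pow]
    rw [LinearMap.coe_sum, Finset.sum_apply]
    apply Submodule.sum_mem
    intro i hi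
    rw [smul_pow, smul_pow]
    simp only [Module.End.mul_apply, Module.End.natCast_apply, LinearMap.smul_apply,
      map_smul, map_nsmul]
    have := hterm i
    rw [Module.End.mul_apply] at this
    exact nsmul_mem (W.smul_mem _ (W.smul_mem _ this)) _
  rw [key] at hsum
  rw [smul_pow, one_pow, LinearMap.smul_apply, Module.End.one_apply] at hsum
  have hc0 : (α * μ - β * lam) ^ N ≠ 0 := pow_ne_zero _ hdet
  have hx := W.smul_mem ((α * μ - β * lam) ^ N)⁻¹ hsum
  rwa [smul_smul, inv_mul_cancel₀ hc0, one_smul] at hx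
end

section
/- Let V be a vector space over ℚ(A), g ≥ 1 a natural number, and (v_n)_{n∈ℤ} a family in V satisfying: (1) for every n ≥ 1, A^{−n−2}·v_n − A^{n+2}·v_{−n} lies in the span of {v_0, …, v_{n−1}}; and (2) for every n ∈ ℤ, Σ_{k=0}^{2g} C(2g,k)·(−1)^k·A^{2g−2k}·v_{n+k} = Σ_{k=0}^{2g} C(2g,k)·(−1)^k·A^{2k−2g}·v_{−n−k}. Then for every n ∈ ℤ, v_n lies in the span of {v_0, v_1, …, v_{2g}}. -/
set_option maxHeartbeats 1000000

lemma X_zpow_injective_aux (a b : ℤ) (hab : b < a)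
    (he : (RatFunc.X : RatFunc ℚ) ^ a = (RatFunc.X : RatFunc ℚ) ^ b) : False := by
  have hX : (RatFunc.X : RatFunc ℚ) ≠ 0 := RatFunc.X_ne_zero
  have h1 : (RatFunc.X : RatFunc ℚ) ^ (a - b) = 1 := by
    rw [zpow_sub₀ hX, he, div_self (zpow_ne_zero _ hX)]
  set d := (a - b).toNat with hd
  have hd0 : 0 < d := by omega
  have h2 : (RatFunc.X : RatFunc ℚ) ^ (d : ℕ) = 1 := by
    rw [← zpow_natCast, hd, Int.toNat_of_nonneg (by omega)]
    exact h1
  have h3 : algebraMap (Polynomial ℚ) (RatFunc ℚ) (Polynomial.X ^ d) =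
      algebraMap (Polynomial ℚ) (RatFunc ℚ) 1 := by
    rw [map_pow, RatFunc.algebraMap_X, map_one, h2]
  have h4 : (Polynomial.X : Polynomial ℚ) ^ d = 1 := RatFunc.algebraMap_injective ℚ h3
  have h5 := congrArg Polynomial.natDegree h4
  simp [Polynomial.natDegree_X_pow] at h5
  omega

lemma X_zpow_ne (a b : ℤ) (h : a ≠ b) :
    (RatFunc.X : RatFunc ℚ) ^ a ≠ (RatFunc.X : RatFunc ℚ) ^ b := by
  intro he
  rcases lt_or_gt_of_ne h with hlt | hlt
  · exact X_zpow_injective_aux b a hlt he.symm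
  · exact X_zpow_injective_aux a b hlt he

theorem stmt_7 {V : Type*} [AddCommGroup V] [Module (RatFunc ℚ) V]
    (g : ℕ) (hg : 1 ≤ g) (v : ℤ → V)
    (h1 : ∀ n : ℤ, 1 ≤ n →
      (RatFunc.X : RatFunc ℚ) ^ (-n - 2) • v n - (RatFunc.X : RatFunc ℚ) ^ (n + 2) • v (-n) ∈
        Submodule.span (RatFunc ℚ) (v '' {m : ℤ | 0 ≤ m ∧ m < n}))
    (h2 : ∀ n : ℤ,
      ∑ k ∈ Finset.range (2 * g + 1),
          (((2 * g).choose k : RatFunc ℚ) * (-1) ^ k *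
            (RatFunc.X : RatFunc ℚ) ^ (2 * (g : ℤ) - 2 * (k : ℤ))) • v (n + k) =
        ∑ k ∈ Finset.range (2 * g + 1),
          (((2 * g).choose k : RatFunc ℚ) * (-1) ^ k *
            (RatFunc.X : RatFunc ℚ) ^ (2 * (k : ℤ) - 2 * (g : ℤ))) • v (-n - k)) :
    ∀ n : ℤ, v n ∈ Submodule.span (RatFunc ℚ) (v '' {m : ℤ | 0 ≤ m ∧ m ≤ 2 * g}) := by
  have hX : (RatFunc.X : RatFunc ℚ) ≠ 0 := RatFunc.X_ne_zero
  set W : Submodule (RatFunc ℚ) V :=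
    Submodule.span (RatFunc ℚ) (v '' {m : ℤ | 0 ≤ m ∧ m ≤ 2 * g}) with hWdef
  have hmem : ∀ m : ℤ, 0 ≤ m → m ≤ 2 * g → v m ∈ W := fun m hm1 hm2 =>
    Submodule.subset_span ⟨m, ⟨hm1, hm2⟩, rfl⟩
  have hspan : ∀ S : Set ℤ, (∀ m ∈ S, v m ∈ W) →
      Submodule.span (RatFunc ℚ) (v '' S) ≤ W := by
    intro S hS
    rw [Submodule.span_le]
    rintro _ ⟨m, hm, rfl⟩
    exact hS m hm
  have hcancel : ∀ (c : RatFunc ℚ) (x : V), c ≠ 0 → c • x ∈ W → x ∈ W := by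
    intro c x hc h
    have := W.smul_mem c⁻¹ h
    rwa [inv_smul_smul₀ hc] at this
  have key : ∀ n : ℕ, v (n : ℤ) ∈ W ∧ v (-(n : ℤ)) ∈ W := by
    intro n
    induction n using Nat.strong_induction_on with
    | _ n ih =>
      -- from h1: relation between v n and v (-n), assuming all smaller indices in W
      have useh1 : (1 : ℤ) ≤ (n : ℤ) → (∀ m : ℤ, 0 ≤ m → m < (n : ℤ) → v m ∈ W) →
          ((RatFunc.X : RatFunc ℚ) ^ (-(n : ℤ) - 2) • v (n : ℤ)
            - (RatFunc.X : RatFunc ℚ) ^ ((n : ℤ) + 2) • v (-(n : ℤ)) ∈ W) := by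
        intro hn1 hsmall
        refine hspan _ ?_ (h1 n hn1)
        rintro m ⟨hm0, hmn⟩
        exact hsmall m hm0 hmn
      have negstep : v (n : ℤ) ∈ W →
          ((RatFunc.X : RatFunc ℚ) ^ (-(n : ℤ) - 2) • v (n : ℤ)
            - (RatFunc.X : RatFunc ℚ) ^ ((n : ℤ) + 2) • v (-(n : ℤ)) ∈ W) →
          v (-(n : ℤ)) ∈ W := by
        intro hvn hrel
        have h' := W.sub_mem (W.smul_mem ((RatFunc.X : RatFunc ℚ) ^ (-(n : ℤ) - 2)) hvn) hrel
        rw [sub_sub_cancel] at h'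
        exact hcancel _ _ (zpow_ne_zero _ hX) h'
      by_cases hle : (n : ℤ) ≤ 2 * g
      · have hvn : v (n : ℤ) ∈ W := hmem n (by positivity) hle
        refine ⟨hvn, ?_⟩
        rcases Nat.eq_zero_or_pos n with h0 | hpos
        · subst h0; simpa using hvn
        · have hn1 : (1 : ℤ) ≤ (n : ℤ) := by exact_mod_cast hpos
          exact negstep hvn (useh1 hn1 (fun m hm0 hmn => hmem m hm0 (by omega)))
      · -- n > 2g
        push_neg at hle
        have ihZ : ∀ m : ℤ, -(n : ℤ) < m → m < (n : ℤ) → v m ∈ W := by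
          intro m hm1 hm2
          have habs : m.natAbs < n := by omega
          rcases Int.natAbs_eq m with h | h
          · rw [h]; exact (ih _ habs).1
          · rw [h]; exact (ih _ habs).2
        have hn1 : (1 : ℤ) ≤ (n : ℤ) := by omega
        have hE2 := useh1 hn1 (fun m hm0 hmn => ihZ m (by omega) hmn)
        -- now extract E1 from h2 at n - 2g
        have hsum := h2 ((n : ℤ) - 2 * g)
        rw [Finset.sum_range_succ, Finset.sum_range_succ] at hsum
        have hi1 : ((n : ℤ) - 2 * g) + ((2 * g : ℕ) : ℤ) = (n : ℤ) := by push_cast; ring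
        have hi2 : (-((n : ℤ) - 2 * g)) - ((2 * g : ℕ) : ℤ) = -(n : ℤ) := by push_cast; ring
        rw [hi1, hi2] at hsum
        have hc1 : (((2 * g).choose (2 * g) : RatFunc ℚ) * (-1) ^ (2 * g) *
            (RatFunc.X : RatFunc ℚ) ^ (2 * (g : ℤ) - 2 * ((2 * g : ℕ) : ℤ)))
            = (RatFunc.X : RatFunc ℚ) ^ (-(2 * (g : ℤ))) := by
          rw [Nat.choose_self, Even.neg_one_pow (even_two_mul g)]
          push_cast
          ring_nf
        have hc2 : (((2 * g).choose (2 * g) : RatFunc ℚ) * (-1) ^ (2 * g) *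
            (RatFunc.X : RatFunc ℚ) ^ (2 * ((2 * g : ℕ) : ℤ) - 2 * (g : ℤ)))
            = (RatFunc.X : RatFunc ℚ) ^ (2 * (g : ℤ)) := by
          rw [Nat.choose_self, Even.neg_one_pow (even_two_mul g)]
          push_cast
          ring_nf
        rw [hc1, hc2] at hsum
        have hSL : (∑ k ∈ Finset.range (2 * g),
            (((2 * g).choose k : RatFunc ℚ) * (-1) ^ k *
              (RatFunc.X : RatFunc ℚ) ^ (2 * (g : ℤ) - 2 * (k : ℤ))) •
              v (((n : ℤ) - 2 * g) + k)) ∈ W := by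
          refine Submodule.sum_mem W fun k hk => W.smul_mem _ (ihZ _ ?_ ?_)
          · have := Finset.mem_range.mp hk; omega
          · have := Finset.mem_range.mp hk; omega
        have hSR : (∑ k ∈ Finset.range (2 * g),
            (((2 * g).choose k : RatFunc ℚ) * (-1) ^ k *
              (RatFunc.X : RatFunc ℚ) ^ (2 * (k : ℤ) - 2 * (g : ℤ))) •
              v ((-((n : ℤ) - 2 * g)) - k)) ∈ W := by
          refine Submodule.sum_mem W fun k hk => W.smul_mem _ (ihZ _ ?_ ?_)
          · have := Finset.mem_range.mp hk; omega
          · have := Finset.mem_range.mp hk; omega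
        have hE1 : (RatFunc.X : RatFunc ℚ) ^ (-(2 * (g : ℤ))) • v (n : ℤ)
            - (RatFunc.X : RatFunc ℚ) ^ (2 * (g : ℤ)) • v (-(n : ℤ)) ∈ W := by
          have heq : (RatFunc.X : RatFunc ℚ) ^ (-(2 * (g : ℤ))) • v (n : ℤ)
              - (RatFunc.X : RatFunc ℚ) ^ (2 * (g : ℤ)) • v (-(n : ℤ))
              = (∑ k ∈ Finset.range (2 * g),
                  (((2 * g).choose k : RatFunc ℚ) * (-1) ^ k *
                    (RatFunc.X : RatFunc ℚ) ^ (2 * (k : ℤ) - 2 * (g : ℤ))) •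
                    v ((-((n : ℤ) - 2 * g)) - k))
                - (∑ k ∈ Finset.range (2 * g),
                  (((2 * g).choose k : RatFunc ℚ) * (-1) ^ k *
                    (RatFunc.X : RatFunc ℚ) ^ (2 * (g : ℤ) - 2 * (k : ℤ))) •
                    v (((n : ℤ) - 2 * g) + k)) := by
            calc (RatFunc.X : RatFunc ℚ) ^ (-(2 * (g : ℤ))) • v (n : ℤ)
                - (RatFunc.X : RatFunc ℚ) ^ (2 * (g : ℤ)) • v (-(n : ℤ))
                = ((∑ k ∈ Finset.range (2 * g),
                    (((2 * g).choose k : RatFunc ℚ) * (-1) ^ k *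
                      (RatFunc.X : RatFunc ℚ) ^ (2 * (g : ℤ) - 2 * (k : ℤ))) •
                      v (((n : ℤ) - 2 * g) + k))
                    + (RatFunc.X : RatFunc ℚ) ^ (-(2 * (g : ℤ))) • v (n : ℤ))
                  - (∑ k ∈ Finset.range (2 * g),
                    (((2 * g).choose k : RatFunc ℚ) * (-1) ^ k *
                      (RatFunc.X : RatFunc ℚ) ^ (2 * (g : ℤ) - 2 * (k : ℤ))) •
                      v (((n : ℤ) - 2 * g) + k))
                  - (RatFunc.X : RatFunc ℚ) ^ (2 * (g : ℤ)) • v (-(n : ℤ)) := by abel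
              _ = ((∑ k ∈ Finset.range (2 * g),
                    (((2 * g).choose k : RatFunc ℚ) * (-1) ^ k *
                      (RatFunc.X : RatFunc ℚ) ^ (2 * (k : ℤ) - 2 * (g : ℤ))) •
                      v ((-((n : ℤ) - 2 * g)) - k))
                    + (RatFunc.X : RatFunc ℚ) ^ (2 * (g : ℤ)) • v (-(n : ℤ)))
                  - (∑ k ∈ Finset.range (2 * g),
                    (((2 * g).choose k : RatFunc ℚ) * (-1) ^ k *
                      (RatFunc.X : RatFunc ℚ) ^ (2 * (g : ℤ) - 2 * (k : ℤ))) •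
                      v (((n : ℤ) - 2 * g) + k))
                  - (RatFunc.X : RatFunc ℚ) ^ (2 * (g : ℤ)) • v (-(n : ℤ)) := by rw [hsum]
              _ = _ := by abel
          rw [heq]
          exact W.sub_mem hSR hSL
        -- eliminate to get v n ∈ W
        have h3 := W.sub_mem (W.smul_mem ((RatFunc.X : RatFunc ℚ) ^ ((n : ℤ) + 2)) hE1)
          (W.smul_mem ((RatFunc.X : RatFunc ℚ) ^ (2 * (g : ℤ))) hE2)
        have heq2 : (RatFunc.X : RatFunc ℚ) ^ ((n : ℤ) + 2) •
              ((RatFunc.X : RatFunc ℚ) ^ (-(2 * (g : ℤ))) • v (n : ℤ)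
                - (RatFunc.X : RatFunc ℚ) ^ (2 * (g : ℤ)) • v (-(n : ℤ)))
            - (RatFunc.X : RatFunc ℚ) ^ (2 * (g : ℤ)) •
              ((RatFunc.X : RatFunc ℚ) ^ (-(n : ℤ) - 2) • v (n : ℤ)
                - (RatFunc.X : RatFunc ℚ) ^ ((n : ℤ) + 2) • v (-(n : ℤ)))
            = ((RatFunc.X : RatFunc ℚ) ^ ((n : ℤ) + 2 - 2 * (g : ℤ))
                - (RatFunc.X : RatFunc ℚ) ^ (2 * (g : ℤ) - (n : ℤ) - 2)) • v (n : ℤ) := by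
          rw [smul_sub, smul_sub, smul_smul, smul_smul, smul_smul, smul_smul,
            ← zpow_add₀ hX, ← zpow_add₀ hX, ← zpow_add₀ hX, ← zpow_add₀ hX, sub_smul]
          ring_nf
          abel
        rw [heq2] at h3
        have hcne : ((RatFunc.X : RatFunc ℚ) ^ ((n : ℤ) + 2 - 2 * (g : ℤ))
            - (RatFunc.X : RatFunc ℚ) ^ (2 * (g : ℤ) - (n : ℤ) - 2)) ≠ 0 :=
          sub_ne_zero.mpr (X_zpow_ne _ _ (by omega))
        have hvn : v (n : ℤ) ∈ W := hcancel _ _ hcne h3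
        exact ⟨hvn, negstep hvn hE2⟩
  intro n
  rcases Int.natAbs_eq n with h | h
  · rw [h]; exact (key n.natAbs).1
  · rw [h]; exact (key n.natAbs).2
end

section
/- In the free group F on four generators a₁, b₁, a₂, b₂, let γ = a₂⁻¹·b₁·a₁·b₁⁻¹, and let φ be the endomorphism determined by a₁ ↦ a₁, b₁ ↦ γ·b₁, a₂ ↦ γ·a₂·γ⁻¹, b₂ ↦ b₂·γ⁻¹. Then φ([a₁,b₁]·[a₂,b₂]) = [a₁,b₁]·[a₂,b₂]. -/
theorem stmt_11 :
    let a₁ : FreeGroup (Fin 4) := FreeGroup.of 0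
    let b₁ : FreeGroup (Fin 4) := FreeGroup.of 1
    let a₂ : FreeGroup (Fin 4) := FreeGroup.of 2
    let b₂ : FreeGroup (Fin 4) := FreeGroup.of 3
    let γ : FreeGroup (Fin 4) := a₂⁻¹ * b₁ * a₁ * b₁⁻¹
    let φ : FreeGroup (Fin 4) →* FreeGroup (Fin 4) :=
      FreeGroup.lift (fun i =>
        if i = 0 then a₁ else if i = 1 then γ * b₁
        else if i = 2 then γ * a₂ * γ⁻¹ else b₂ * γ⁻¹)
    φ ((a₁ * b₁ * a₁⁻¹ * b₁⁻¹) * (a₂ * b₂ * a₂⁻¹ * b₂⁻¹)) =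
      (a₁ * b₁ * a₁⁻¹ * b₁⁻¹) * (a₂ * b₂ * a₂⁻¹ * b₂⁻¹) := by
  intro a₁ b₁ a₂ b₂ γ φ
  simp only [φ, γ, a₁, b₁, a₂, b₂, map_mul, map_inv, FreeGroup.lift_apply_of, Fin.isValue, Fin.reduceEq, reduceIte, if_true]
  group
end
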